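/- In S₈, the permutation λ = (1 5)(2 6)(3 7)(4 8) commutes with both ω₈ = (1 3 2 4)(5 7 6 8) and κ = (1 7)(3 5)(2 8)(4 6), λ does not belong to the subgroup ⟨ω₈, κ⟩, and the subgroup ⟨ω₈, κ, λ⟩ of S₈ has order 16; hence adjoining the local hip–knee symmetry λ preserves the global D₄ symmetry generated by ω₈ and κ. -/

import Mathlib

/-!
The relations `ω₈ ^ 4 = κ ^ 2 = 1` and `κ ω₈ κ⁻¹ = ω₈⁻¹` make `⟨ω₈, κ⟩` the image of a homomorphism
from the dihedral group of order 8, which is injective, so `⟨ω₈, κ⟩ ≅ D₄`; `λ` is not one of its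
eight elements. Since `λ` is an involution centralizing `⟨ω₈, κ⟩` and lies outside it,
`⟨ω₈, κ, λ⟩ = ⟨ω₈, κ⟩ × ⟨λ⟩` has order `8 · 2 = 16`.
-/

/-- ω₈ = (1 3 2 4)(5 7 6 8), written 0-indexed on `Fin 8` as (0 2 1 3)(4 6 5 7). -/
def ω₈ : Equiv.Perm (Fin 8) := c[0, 2, 1, 3] * c[4, 6, 5, 7]

/-- κ = (1 7)(3 5)(2 8)(4 6), written 0-indexed on `Fin 8` as (0 6)(2 4)(1 7)(3 5). -/
def κ : Equiv.Perm (Fin 8) :=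
  Equiv.swap 0 6 * Equiv.swap 2 4 * Equiv.swap 1 7 * Equiv.swap 3 5

/-- λ = (1 5)(2 6)(3 7)(4 8), written 0-indexed on `Fin 8` as (0 4)(1 5)(2 6)(3 7). -/
def lam : Equiv.Perm (Fin 8) :=
  Equiv.swap 0 4 * Equiv.swap 1 5 * Equiv.swap 2 6 * Equiv.swap 3 7

section General

variable {G : Type*} [Group G] {a : G} {n : ℕ}

lemma zpow_eq_zpow_of_intCast_eq (ha : a ^ n = 1) {i j : ℤ} (h : (i : ZMod n) = j) :
    a ^ i = a ^ j := by
  rw [zpow_eq_zpow_iff_modEq]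
  exact Int.ModEq.of_dvd (Int.natCast_dvd_natCast.mpr (orderOf_dvd_of_pow_eq_one ha))
    ((ZMod.intCast_eq_intCast_iff _ _ _).mp h)

lemma zpow_cast_add_of_pow_eq_one (ha : a ^ n = 1) (i j : ZMod n) :
    a ^ ((i + j).cast : ℤ) = a ^ (i.cast : ℤ) * a ^ (j.cast : ℤ) := by
  rw [← zpow_add]
  exact zpow_eq_zpow_of_intCast_eq ha (by simp [ZMod.intCast_cast])

lemma zpow_cast_sub_of_pow_eq_one (ha : a ^ n = 1) (i j : ZMod n) :
    a ^ ((i - j).cast : ℤ) = a ^ (-(j.cast : ℤ)) * a ^ (i.cast : ℤ) := by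
  rw [← zpow_add, neg_add_eq_sub]
  exact zpow_eq_zpow_of_intCast_eq ha (by simp [ZMod.intCast_cast])

namespace Subgroup

lemma disjoint_zpowers_of_sq_eq_one {H : Subgroup G} {g : G} (hg : g ^ 2 = 1) (hgH : g ∉ H) :
    Disjoint H (zpowers g) := by
  rw [disjoint_def]
  intro x hx hxg
  obtain ⟨k, rfl⟩ := mem_zpowers_iff.mp hxg
  have hk : g ^ k = g ^ (k % 2) := zpow_eq_zpow_of_intCast_eq hg (ZMod.intCast_mod k 2).symm
  rcases Int.emod_two_eq_zero_or_one k with h | h <;> rw [hk, h] at hx ⊢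
  · exact zpow_zero g
  · exact absurd (by simpa using hx) hgH

lemma card_sup_eq_mul_of_le_centralizer {H K : Subgroup G} (hHK : K ≤ centralizer H)
    (hdisj : Disjoint H K) : Nat.card ↥(H ⊔ K) = Nat.card H * Nat.card K := by
  have hcomm (h : H) (k : K) : Commute (H.subtype h) (K.subtype k) := hHK k.2 h h.2
  have hinj : Function.Injective (H.subtype.noncommCoprod K.subtype hcomm) := by
    rw [MonoidHom.noncommCoprod_injective]
    exact ⟨H.subtype_injective, K.subtype_injective, by simpa using hdisj⟩
  rw [← Nat.card_prod, Nat.card_congr (MonoidHom.ofInjective hinj).toEquiv,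
    MonoidHom.noncommCoprod_range, H.range_subtype, K.range_subtype]

end Subgroup

end General

namespace DihedralGroup

variable {n : ℕ} {G : Type*} [Group G] {a b : G}

def lift (ha : a ^ n = 1) (hb : b ^ 2 = 1) (hba : b * a * b⁻¹ = a⁻¹) : DihedralGroup n →* G where
  toFun
    | r i => a ^ (i.cast : ℤ)
    | sr i => b * a ^ (i.cast : ℤ)
  map_one' := show a ^ ((0 : ZMod n).cast : ℤ) = 1 by simp
  map_mul' := by
    have hb_inv : b⁻¹ = b := inv_eq_of_mul_eq_one_right (by rw [← sq, hb])
    have hconj (k : ℤ) : a ^ k * b = b * a ^ (-k) := by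
      rw [← neg_neg k, ← inv_zpow', ← hba, conj_zpow, neg_neg, hb_inv, mul_assoc, ← sq, hb,
        mul_one]
    rintro (i | i) (j | j) <;> simp only [r_mul_r, r_mul_sr, sr_mul_r, sr_mul_sr]
    · exact zpow_cast_add_of_pow_eq_one ha i j
    · rw [zpow_cast_sub_of_pow_eq_one ha, ← mul_assoc _ b, hconj, mul_assoc]
    · rw [zpow_cast_add_of_pow_eq_one ha, mul_assoc]
    · rw [zpow_cast_sub_of_pow_eq_one ha, mul_assoc, ← mul_assoc _ b, hconj, ← mul_assoc,
        ← mul_assoc, ← sq, hb, one_mul]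

lemma range_lift (ha : a ^ n = 1) (hb : b ^ 2 = 1) (hba : b * a * b⁻¹ = a⁻¹) :
    (lift ha hb hba).range = Subgroup.closure {a, b} := by
  have ha_mem : a ∈ Subgroup.closure {a, b} := Subgroup.subset_closure (by simp)
  have hb_mem : b ∈ Subgroup.closure {a, b} := Subgroup.subset_closure (by simp)
  apply le_antisymm
  · rintro _ ⟨i | i, rfl⟩
    · exact zpow_mem ha_mem _
    · exact mul_mem hb_mem (zpow_mem ha_mem _)
  · rw [Subgroup.closure_le, Set.insert_subset_iff, Set.singleton_subset_iff]
    refine ⟨⟨r 1, ?_⟩, ⟨sr 0, ?_⟩⟩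
    · show a ^ ((1 : ZMod n).cast : ℤ) = a
      rw [zpow_eq_zpow_of_intCast_eq ha (j := 1) (by simp), zpow_one]
    · show b * a ^ ((0 : ZMod n).cast : ℤ) = b
      simp

end DihedralGroup

set_option maxRecDepth 2000 in
lemma ω₈_pow_four : ω₈ ^ 4 = 1 := by decide

lemma κ_sq : κ ^ 2 = 1 := by decide

lemma κ_mul_ω₈_mul_κ_inv : κ * ω₈ * κ⁻¹ = ω₈⁻¹ := by decide

lemma lam_sq : lam ^ 2 = 1 := by decide

lemma orderOf_lam : orderOf lam = 2 := orderOf_eq_prime lam_sq (by decide)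

lemma commute_lam_ω₈ : Commute lam ω₈ := show lam * ω₈ = ω₈ * lam by decide

lemma commute_lam_κ : Commute lam κ := show lam * κ = κ * lam by decide

def dihedralToPerm : DihedralGroup 4 →* Equiv.Perm (Fin 8) :=
  DihedralGroup.lift ω₈_pow_four κ_sq κ_mul_ω₈_mul_κ_inv

lemma range_dihedralToPerm : dihedralToPerm.range = Subgroup.closure {ω₈, κ} :=
  DihedralGroup.range_lift _ _ _

lemma dihedralToPerm_injective : Function.Injective dihedralToPerm := by decide

lemma card_closure_ω₈_κ : Nat.card (Subgroup.closure {ω₈, κ}) = 8 := by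
  rw [← range_dihedralToPerm,
    ← Nat.card_congr (MonoidHom.ofInjective dihedralToPerm_injective).toEquiv,
    DihedralGroup.nat_card]

lemma lam_notMem_closure_ω₈_κ : lam ∉ Subgroup.closure {ω₈, κ} := by
  rw [← range_dihedralToPerm, MonoidHom.mem_range, not_exists]
  decide

lemma zpowers_lam_le_centralizer :
    Subgroup.zpowers lam ≤ Subgroup.centralizer (Subgroup.closure {ω₈, κ}) := by
  rw [Subgroup.zpowers_le, Subgroup.centralizer_closure, Subgroup.mem_centralizer_iff]
  rintro _ (rfl | rfl)
  exacts [commute_lam_ω₈.eq.symm, commute_lam_κ.eq.symm]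

/-- λ commutes with ω₈ and κ, λ ∉ ⟨ω₈, κ⟩, and ⟨ω₈, κ, λ⟩ has order 16; hence adjoining
the local hip–knee symmetry λ preserves the global D₄ symmetry generated by ω₈ and κ. -/
theorem stmt_11 :
    Commute lam ω₈ ∧ Commute lam κ ∧
    lam ∉ Subgroup.closure {ω₈, κ} ∧
    Nat.card (Subgroup.closure {ω₈, κ, lam} : Subgroup (Equiv.Perm (Fin 8))) = 16 := by
  refine ⟨commute_lam_ω₈, commute_lam_κ, lam_notMem_closure_ω₈_κ, ?_⟩
  have hgen : ({ω₈, κ, lam} : Set (Equiv.Perm (Fin 8))) = {ω₈, κ} ∪ {lam} := by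
    rw [Set.insert_union, Set.singleton_union]
  rw [hgen, Subgroup.closure_union, ← Subgroup.zpowers_eq_closure,
    Subgroup.card_sup_eq_mul_of_le_centralizer zpowers_lam_le_centralizer
      (Subgroup.disjoint_zpowers_of_sq_eq_one lam_sq lam_notMem_closure_ω₈_κ),
    card_closure_ω₈_κ, Nat.card_zpowers, orderOf_lam]
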